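/- arXiv:math/0604314 — 6 statements merged into one kernel-verified Lean document; each statement's English description precedes it below -/
import Mathlib

section
/- If n = 3^a · 5^b · q^c with q ≥ 7 prime and a, b, c ≥ 0, and n is not one of 1, 3, 5, 9, then σ(n) < e^γ · n · log log n. -/
open Real Finset

private lemma log_lb (x : ℝ) (p s : ℕ) (hs : 0 < s) (hx : 0 < x)
    (h : (2.7182818286 : ℝ) ^ p < x ^ s) : (p : ℝ) / s < Real.log x := by
  have h1 : Real.exp p < x ^ s := by
    have he : Real.exp (p : ℝ) = Real.exp 1 ^ p := by
      rw [← Real.exp_nat_mul]; norm_num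
    rw [he]
    calc Real.exp 1 ^ p ≤ (2.7182818286 : ℝ) ^ p :=
          pow_le_pow_left₀ (Real.exp_pos 1).le Real.exp_one_lt_d9.le p
      _ < x ^ s := h
  have h2 : (p : ℝ) < Real.log (x ^ s) :=
    (Real.lt_log_iff_exp_lt (by positivity)).2 h1
  rw [Real.log_pow] at h2
  rw [div_lt_iff₀ (by exact_mod_cast hs)]
  linarith

private lemma gamma_gt : (5 / 9 : ℝ) < Real.eulerMascheroniConstant := by
  have h := Real.eulerMascheroniSeq_lt_eulerMascheroniConstant 31
  unfold Real.eulerMascheroniSeq at h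
  have hlog : Real.log (((31 : ℕ) : ℝ) + 1) < 3465735904 / 1000000000 := by
    have h32 : ((31 : ℕ) : ℝ) + 1 = 2 ^ 5 := by norm_num
    rw [h32, Real.log_pow]
    have := Real.log_two_lt_d9
    push_cast
    nlinarith
  have hhq : (40272 / 10000 : ℚ) < harmonic 31 := by
    norm_num [harmonic, Finset.sum_range_succ]
  have hh : ((40272 / 10000 : ℚ) : ℝ) < ((harmonic 31 : ℚ) : ℝ) := by
    exact Rat.cast_lt.2 hhq
  push_cast at hh
  set A := ((harmonic 31 : ℚ) : ℝ) with hA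
  set B := Real.log (((31 : ℕ) : ℝ) + 1)
  linarith

private lemma exp_gamma_gt : (1.742 : ℝ) < Real.exp Real.eulerMascheroniConstant := by
  have key : (1.742 : ℝ) < Real.exp (5 / 9) := by
    by_contra hcon
    push_neg at hcon
    have h9 : Real.exp (5 / 9) ^ 9 ≤ (1.742 : ℝ) ^ 9 :=
      pow_le_pow_left₀ (Real.exp_pos _).le hcon 9
    have he : Real.exp (5 / 9 : ℝ) ^ 9 = Real.exp 5 := by
      rw [← Real.exp_nat_mul]; norm_num
    have h5 : (2.7182818283 : ℝ) ^ 5 < Real.exp 5 := by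
      have he5 : Real.exp (5 : ℝ) = Real.exp 1 ^ 5 := by
        rw [← Real.exp_nat_mul]; norm_num
      rw [he5]
      exact pow_lt_pow_left₀ Real.exp_one_gt_d9 (by norm_num) (by norm_num)
    rw [he] at h9
    nlinarith
  exact lt_trans key (Real.exp_lt_exp.2 gamma_gt)

private lemma case_bound (n N₀ : ℕ) (K L M : ℝ) (hN : N₀ ≤ n) (hN₀ : 2 ≤ N₀)
    (hS : ((∑ d ∈ n.divisors, d : ℕ) : ℝ) ≤ K * n)
    (hL0 : 0 < L) (hM0 : 0 < M)
    (hL : L < Real.log N₀) (hM : M < Real.log L)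
    (hK : K ≤ 1.742 * M) :
    ((∑ d ∈ n.divisors, d : ℕ) : ℝ) <
      Real.exp Real.eulerMascheroniConstant * n * Real.log (Real.log n) := by
  have hn0 : 0 < n := lt_of_lt_of_le (by omega) hN
  have hN0R : (0 : ℝ) < (N₀ : ℝ) := by exact_mod_cast lt_of_lt_of_le (by norm_num) hN₀
  have hcast : (N₀ : ℝ) ≤ (n : ℝ) := by exact_mod_cast hN
  have h1 : Real.log N₀ ≤ Real.log n := Real.log_le_log hN0R hcast
  have h2 : M < Real.log (Real.log n) := by
    have ha : Real.log L < Real.log (Real.log N₀) := Real.log_lt_log hL0 hL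
    have hb : Real.log (Real.log N₀) ≤ Real.log (Real.log n) :=
      Real.log_le_log (lt_trans hL0 hL) h1
    linarith
  calc ((∑ d ∈ n.divisors, d : ℕ) : ℝ) ≤ K * n := hS
    _ ≤ (1.742 * M) * n := mul_le_mul_of_nonneg_right hK (Nat.cast_nonneg n)
    _ < (Real.exp Real.eulerMascheroniConstant * Real.log (Real.log n)) * n := by
        apply mul_lt_mul_of_pos_right
        · exact mul_lt_mul'' exp_gamma_gt h2 (by norm_num) hM0.le
        · exact_mod_cast hn0
    _ = Real.exp Real.eulerMascheroniConstant * n * Real.log (Real.log n) := by ring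

private lemma S_pp {p : ℕ} (hp : p.Prime) (k : ℕ) :
    ((∑ d ∈ (p ^ k).divisors, d : ℕ) : ℝ) < ((p : ℝ) / (p - 1)) * (p : ℝ) ^ k := by
  have hp2 : 2 ≤ p := hp.two_le
  have hp1 : (1 : ℝ) < (p : ℝ) := by exact_mod_cast hp2
  rw [Nat.sum_divisors_prime_pow hp]
  push_cast
  rw [geom_sum_eq (ne_of_gt hp1)]
  have hd : (0 : ℝ) < (p : ℝ) - 1 := by linarith
  rw [div_lt_iff₀ hd]
  have heq : (p : ℝ) / ((p : ℝ) - 1) * (p : ℝ) ^ k * ((p : ℝ) - 1) = (p : ℝ) ^ (k + 1) := by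
    field_simp; ring
  rw [heq]
  linarith [pow_pos (lt_trans one_pos hp1) (k + 1)]

private lemma S3 (k : ℕ) :
    ((∑ d ∈ (3 ^ k).divisors, d : ℕ) : ℝ) < 3 / 2 * 3 ^ k := by
  have h := S_pp Nat.prime_three k
  norm_num at h ⊢
  convert h using 2 <;> norm_num

private lemma S5 (k : ℕ) :
    ((∑ d ∈ (5 ^ k).divisors, d : ℕ) : ℝ) < 5 / 4 * 5 ^ k := by
  have h := S_pp (by norm_num : Nat.Prime 5) k
  norm_num at h ⊢
  convert h using 2 <;> norm_num

private lemma Sq {q : ℕ} (hq : q.Prime) (hq7 : 7 ≤ q) (k : ℕ) :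
    ((∑ d ∈ (q ^ k).divisors, d : ℕ) : ℝ) < 7 / 6 * (q : ℝ) ^ k := by
  have h := S_pp hq k
  have hq7' : (7 : ℝ) ≤ (q : ℝ) := by exact_mod_cast hq7
  have hfrac : (q : ℝ) / ((q : ℝ) - 1) ≤ 7 / 6 := by
    rw [div_le_div_iff₀ (by linarith) (by norm_num)]
    linarith
  have hpk : (0 : ℝ) ≤ (q : ℝ) ^ k := by positivity
  calc ((∑ d ∈ (q ^ k).divisors, d : ℕ) : ℝ) < (q : ℝ) / ((q : ℝ) - 1) * (q : ℝ) ^ k := h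
    _ ≤ 7 / 6 * (q : ℝ) ^ k := mul_le_mul_of_nonneg_right hfrac hpk

theorem robin_special_form (a b c q n : ℕ) (hq : q.Prime) (hq7 : 7 ≤ q)
    (hn : n = 3 ^ a * 5 ^ b * q ^ c)
    (h : n ∉ ({1, 3, 5, 9} : Finset ℕ)) :
    ((∑ d ∈ n.divisors, d : ℕ) : ℝ) <
      Real.exp Real.eulerMascheroniConstant * n * Real.log (Real.log n) := by
  simp only [Finset.mem_insert, Finset.mem_singleton, not_or] at h
  obtain ⟨h1, h3, h5, h9⟩ := h
  have hq3 : q ≠ 3 := by omega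
  have hq5 : q ≠ 5 := by omega
  have cop35 : Nat.Coprime (3 ^ a) (5 ^ b) := Nat.Coprime.pow a b (by decide)
  have cop3q : Nat.Coprime (3 ^ a) (q ^ c) :=
    Nat.Coprime.pow a c ((Nat.coprime_primes Nat.prime_three hq).2 (Ne.symm hq3))
  have cop5q : Nat.Coprime (5 ^ b) (q ^ c) :=
    Nat.Coprime.pow b c ((Nat.coprime_primes (by norm_num) hq).2 (Ne.symm hq5))
  rcases Nat.eq_zero_or_pos a with ha | ha <;>
    rcases Nat.eq_zero_or_pos b with hb | hb <;>
      rcases Nat.eq_zero_or_pos c with hc | hc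
  · -- a=b=c=0 : n = 1
    exfalso; apply h1; rw [hn, ha, hb, hc]; norm_num
  · -- a=0, b=0, c>0 : n = q^c
    rw [ha, hb] at hn
    simp only [pow_zero, one_mul] at hn
    by_cases hn7 : n = 7
    · subst hn7
      have hSv : (∑ d ∈ (7 : ℕ).divisors, d) = 8 := by
        have e7 : (7 : ℕ) = 7 ^ 1 := rfl
        rw [e7, Nat.sum_divisors_prime_pow (by norm_num)]
        simp [Finset.sum_range_succ]
      apply case_bound 7 7 (8 / 7) (97 / 50) (33 / 50) le_rfl (by norm_num)
      · rw [hSv]; norm_num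
      · norm_num
      · norm_num
      · have := log_lb 7 97 50 (by norm_num) (by norm_num) (by norm_num)
        push_cast at this ⊢; linarith
      · have := log_lb (97 / 50) 33 50 (by norm_num) (by norm_num) (by norm_num)
        push_cast at this ⊢; linarith
      · norm_num
    · have hn11 : 11 ≤ n := by
        rcases lt_or_ge q 11 with hq11 | hq11
        · have hq7' : q = 7 := by
            interval_cases q
            · rfl
            · exact absurd hq (by norm_num)
            · exact absurd hq (by norm_num)
            · exact absurd hq (by norm_num)
          subst hq7'
          have hc2 : 2 ≤ c := by
            rcases c with _ | _ | c
            · omega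
            · exfalso; apply hn7; rw [hn]; norm_num
            · omega
          calc 11 ≤ 7 ^ 2 := by norm_num
            _ ≤ 7 ^ c := Nat.pow_le_pow_right (by norm_num) hc2
            _ = n := hn.symm
        · calc 11 ≤ q := hq11
            _ ≤ q ^ c := Nat.le_self_pow hc.ne' q
            _ = n := hn.symm
      apply case_bound n 11 (7 / 6) (239 / 100) (87 / 100) hn11 (by norm_num)
      · rw [hn]; exact_mod_cast (Sq hq hq7 c).le
      · norm_num
      · norm_num
      · have := log_lb 11 239 100 (by norm_num) (by norm_num) (by norm_num)
        push_cast at this ⊢; linarith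
      · have := log_lb (239 / 100) 87 100 (by norm_num) (by norm_num) (by norm_num)
        push_cast at this ⊢; linarith
      · norm_num
  · -- a=0, b>0, c=0 : n = 5^b
    rw [ha, hc] at hn
    simp only [pow_zero, one_mul, mul_one] at hn
    have hb2 : 2 ≤ b := by
      rcases b with _ | _ | b
      · omega
      · exfalso; apply h5; rw [hn]; norm_num
      · omega
    have hn25 : 25 ≤ n := by
      calc 25 = 5 ^ 2 := by norm_num
        _ ≤ 5 ^ b := Nat.pow_le_pow_right (by norm_num) hb2
        _ = n := hn.symm
    apply case_bound n 25 (5 / 4) 3 (109 / 100) hn25 (by norm_num)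
    · rw [hn]; exact_mod_cast (S5 b).le
    · norm_num
    · norm_num
    · have := log_lb 25 3 1 (by norm_num) (by norm_num) (by norm_num)
      push_cast at this ⊢; linarith
    · have := log_lb 3 109 100 (by norm_num) (by norm_num) (by norm_num)
      push_cast at this ⊢; linarith
    · norm_num
  · -- a=0, b>0, c>0 : n = 5^b q^c ≥ 35
    rw [ha] at hn
    simp only [pow_zero, one_mul] at hn
    have hn21 : 21 ≤ n := by
      calc 21 ≤ 5 * 7 := by norm_num
        _ ≤ 5 ^ b * q ^ c := Nat.mul_le_mul (Nat.le_self_pow hb.ne' 5)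
            (le_trans hq7 (Nat.le_self_pow hc.ne' q))
        _ = n := hn.symm
    have hSdec : (∑ d ∈ n.divisors, d) =
        (∑ d ∈ (5 ^ b).divisors, d) * (∑ d ∈ (q ^ c).divisors, d) := by
      rw [hn, Nat.Coprime.sum_divisors_mul cop5q]
    apply case_bound n 21 (7 / 4) 3 (109 / 100) hn21 (by norm_num)
    · have hB := mul_le_mul (S5 b).le (Sq hq hq7 c).le (Nat.cast_nonneg _) (by positivity)
      rw [hSdec, hn]
      push_cast
      push_cast at hB
      nlinarith [hB, pow_pos (show (0:ℝ) < 5 by norm_num) b,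
        pow_pos (show (0:ℝ) < (q:ℝ) by exact_mod_cast hq.pos) c]
    · norm_num
    · norm_num
    · have := log_lb 21 3 1 (by norm_num) (by norm_num) (by norm_num)
      push_cast at this ⊢; linarith
    · have := log_lb 3 109 100 (by norm_num) (by norm_num) (by norm_num)
      push_cast at this ⊢; linarith
    · norm_num
  · -- a>0, b=0, c=0 : n = 3^a
    rw [hb, hc] at hn
    simp only [pow_zero, mul_one] at hn
    have ha3 : 3 ≤ a := by
      rcases a with _ | _ | _ | a
      · omega
      · exfalso; apply h3; rw [hn]; norm_num
      · exfalso; apply h9; rw [hn]; norm_num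
      · omega
    have hn27 : 27 ≤ n := by
      calc 27 = 3 ^ 3 := by norm_num
        _ ≤ 3 ^ a := Nat.pow_le_pow_right (by norm_num) ha3
        _ = n := hn.symm
    apply case_bound n 27 (3 / 2) 3 (109 / 100) hn27 (by norm_num)
    · rw [hn]; exact_mod_cast (S3 a).le
    · norm_num
    · norm_num
    · have := log_lb 27 3 1 (by norm_num) (by norm_num) (by norm_num)
      push_cast at this ⊢; linarith
    · have := log_lb 3 109 100 (by norm_num) (by norm_num) (by norm_num)
      push_cast at this ⊢; linarith
    · norm_num
  · -- a>0, b=0, c>0 : n = 3^a q^c ≥ 21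
    rw [hb] at hn
    simp only [pow_zero, mul_one] at hn
    have hn21 : 21 ≤ n := by
      calc 21 = 3 * 7 := by norm_num
        _ ≤ 3 ^ a * q ^ c := Nat.mul_le_mul (Nat.le_self_pow ha.ne' 3)
            (le_trans hq7 (Nat.le_self_pow hc.ne' q))
        _ = n := hn.symm
    have hSdec : (∑ d ∈ n.divisors, d) =
        (∑ d ∈ (3 ^ a).divisors, d) * (∑ d ∈ (q ^ c).divisors, d) := by
      rw [hn, Nat.Coprime.sum_divisors_mul cop3q]
    apply case_bound n 21 (7 / 4) 3 (109 / 100) hn21 (by norm_num)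
    · have hB := mul_le_mul (S3 a).le (Sq hq hq7 c).le (Nat.cast_nonneg _) (by positivity)
      rw [hSdec, hn]
      push_cast
      push_cast at hB
      nlinarith [hB]
    · norm_num
    · norm_num
    · have := log_lb 21 3 1 (by norm_num) (by norm_num) (by norm_num)
      push_cast at this ⊢; linarith
    · have := log_lb 3 109 100 (by norm_num) (by norm_num) (by norm_num)
      push_cast at this ⊢; linarith
    · norm_num
  · -- a>0, b>0, c=0 : n = 3^a 5^b
    rw [hc] at hn
    simp only [pow_zero, mul_one] at hn
    have hSdec : (∑ d ∈ n.divisors, d) =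
        (∑ d ∈ (3 ^ a).divisors, d) * (∑ d ∈ (5 ^ b).divisors, d) := by
      rw [hn, Nat.Coprime.sum_divisors_mul cop35]
    by_cases hn15 : n = 15
    · subst hn15
      have hSv : (∑ d ∈ (15 : ℕ).divisors, d) = 24 := by
        have e15 : (15 : ℕ) = 3 * 5 := rfl
        rw [e15, Nat.Coprime.sum_divisors_mul (by decide)]
        have e3 : (3 : ℕ) = 3 ^ 1 := rfl
        have e5 : (5 : ℕ) = 5 ^ 1 := rfl
        rw [e3, e5, Nat.sum_divisors_prime_pow (by norm_num),
          Nat.sum_divisors_prime_pow (by norm_num)]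
        simp [Finset.sum_range_succ]
      apply case_bound 15 15 (8 / 5) (27 / 10) (99 / 100) le_rfl (by norm_num)
      · rw [hSv]; norm_num
      · norm_num
      · norm_num
      · have := log_lb 15 27 10 (by norm_num) (by norm_num) (by norm_num)
        push_cast at this ⊢; linarith
      · have := log_lb (27 / 10) 99 100 (by norm_num) (by norm_num) (by norm_num)
        push_cast at this ⊢; linarith
      · norm_num
    · have hn45 : 45 ≤ n := by
        have hab : 2 ≤ a ∨ 2 ≤ b := by
          by_contra hcon
          push_neg at hcon
          apply hn15
          have ha1 : a = 1 := by omega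
          have hb1 : b = 1 := by omega
          rw [hn, ha1, hb1]
          norm_num
        rcases hab with h2a | h2b
        · calc 45 = 3 ^ 2 * 5 := by norm_num
            _ ≤ 3 ^ a * 5 ^ b := Nat.mul_le_mul (Nat.pow_le_pow_right (by norm_num) h2a)
                (Nat.le_self_pow hb.ne' 5)
            _ = n := hn.symm
        · calc 45 ≤ 3 * 5 ^ 2 := by norm_num
            _ ≤ 3 ^ a * 5 ^ b := Nat.mul_le_mul (Nat.le_self_pow ha.ne' 3)
                (Nat.pow_le_pow_right (by norm_num) h2b)
            _ = n := hn.symm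
      apply case_bound n 45 (15 / 8) (37 / 10) (13 / 10) hn45 (by norm_num)
      · have hB := mul_le_mul (S3 a).le (S5 b).le (Nat.cast_nonneg _) (by positivity)
        rw [hSdec, hn]
        push_cast
        push_cast at hB
        nlinarith [hB]
      · norm_num
      · norm_num
      · have := log_lb 45 37 10 (by norm_num) (by norm_num) (by norm_num)
        push_cast at this ⊢; linarith
      · have := log_lb (37 / 10) 13 10 (by norm_num) (by norm_num) (by norm_num)
        push_cast at this ⊢; linarith
      · norm_num
  · -- a>0, b>0, c>0 : n ≥ 105
    have hn105 : 105 ≤ n := by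
      calc 105 = 3 * 5 * 7 := by norm_num
        _ ≤ 3 ^ a * 5 ^ b * q ^ c :=
          Nat.mul_le_mul (Nat.mul_le_mul (Nat.le_self_pow ha.ne' 3)
            (Nat.le_self_pow hb.ne' 5)) (le_trans hq7 (Nat.le_self_pow hc.ne' q))
        _ = n := hn.symm
    have cop : Nat.Coprime (3 ^ a * 5 ^ b) (q ^ c) := Nat.Coprime.mul cop3q cop5q
    have hSdec : (∑ d ∈ n.divisors, d) =
        ((∑ d ∈ (3 ^ a).divisors, d) * (∑ d ∈ (5 ^ b).divisors, d)) *
          (∑ d ∈ (q ^ c).divisors, d) := by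
      rw [hn, Nat.Coprime.sum_divisors_mul cop, Nat.Coprime.sum_divisors_mul cop35]
    apply case_bound n 105 (35 / 16) 4 (138 / 100) hn105 (by norm_num)
    · have hB1 := mul_le_mul (S3 a).le (S5 b).le (Nat.cast_nonneg _) (by positivity)
      have hB := mul_le_mul hB1 (Sq hq hq7 c).le (Nat.cast_nonneg _)
        (by positivity)
      rw [hSdec, hn]
      push_cast
      push_cast at hB
      nlinarith [hB]
    · norm_num
    · norm_num
    · have := log_lb 105 4 1 (by norm_num) (by norm_num) (by norm_num)
      push_cast at this ⊢; linarith
    · have := log_lb 4 138 100 (by norm_num) (by norm_num) (by norm_num)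
      push_cast at this ⊢; linarith
    · norm_num
end

section
/- If n = 3^a · 5^b · q^c with q ≥ 7 prime and a, b, c ≥ 0, and n is not one of 1, 3, 5, 9, 15, then n/φ(n) < e^γ · log log n. -/
/-! The ratio `n / φ n = ∏_{p ∣ n} p / (p - 1)` is multiplicative, so for `n = 3^a 5^b q^c` it is
at most `(3/2)(5/4)(7/6) = 35/16`, at most `7/4` if `15 ∤ n`, and at most `7/6` if `3 ∤ n` and
`5 ∤ n`. As `n` is odd, the excluded values force `n ≥ 35`, `n ≥ 21` and `n ≥ 7` in these three
cases. The explicit bounds `γ > 29/51` (from `γ > H₆₃ - log 64`), `log log 7 > 0.665`,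
`log log 21 > 1` and `log log 35 > 5/4` then close the gap. -/

open Real

theorem Real.exp_lt_of_lt_pow {r x : ℝ} {p q : ℕ} (hq : q ≠ 0) (hx : 0 ≤ x) (hr : q * r = p)
    (h : 2.7182818286 ^ p < x ^ q) : exp r < x := by
  rw [← pow_lt_pow_iff_left₀ (exp_pos r).le hx hq, ← exp_nat_mul, hr, ← mul_one (p : ℝ),
    exp_nat_mul]
  exact (pow_le_pow_left₀ (exp_pos 1).le exp_one_lt_d9.le p).trans_lt h

theorem Real.lt_exp_of_pow_lt {r x : ℝ} {p q : ℕ} (hq : q ≠ 0) (hx : 0 ≤ x) (hr : q * r = p)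
    (h : x ^ q < 2.7182818283 ^ p) : x < exp r := by
  rw [← pow_lt_pow_iff_left₀ hx (exp_pos r).le hq, ← exp_nat_mul, hr, ← mul_one (p : ℝ),
    exp_nat_mul]
  exact h.trans_le (pow_le_pow_left₀ (by norm_num) exp_one_gt_d9.le p)

theorem Real.lt_log_log_of_exp_lt {r s x : ℝ} (hr : exp r < s) (hs : exp s < x) :
    r < log (log x) := by
  have hs0 : 0 < s := (exp_pos r).trans hr
  have hlog : s < log x := (lt_log_iff_exp_lt ((exp_pos s).trans hs)).2 hs
  exact ((lt_log_iff_exp_lt hs0).2 hr).trans (log_lt_log hs0 hlog)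

theorem Real.log_log_seven_gt : 0.665 < log (log 7) :=
  lt_log_log_of_exp_lt (s := 107 / 55)
    (exp_lt_of_lt_pow (p := 133) (q := 200) (by norm_num) (by norm_num) (by norm_num) (by norm_num))
    (exp_lt_of_lt_pow (p := 107) (q := 55) (by norm_num) (by norm_num) (by norm_num) (by norm_num))

theorem Real.one_lt_log_log_twenty_one : 1 < log (log 21) :=
  lt_log_log_of_exp_lt (s := 3)
    (exp_lt_of_lt_pow (p := 1) (q := 1) (by norm_num) (by norm_num) (by norm_num) (by norm_num))
    (exp_lt_of_lt_pow (p := 3) (q := 1) (by norm_num) (by norm_num) (by norm_num) (by norm_num))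

theorem Real.log_log_thirty_five_gt : 5 / 4 < log (log 35) :=
  lt_log_log_of_exp_lt (s := 7 / 2)
    (exp_lt_of_lt_pow (p := 5) (q := 4) (by norm_num) (by norm_num) (by norm_num) (by norm_num))
    (exp_lt_of_lt_pow (p := 7) (q := 2) (by norm_num) (by norm_num) (by norm_num) (by norm_num))

theorem Real.eulerMascheroniConstant_gt : 29 / 51 < eulerMascheroniConstant := by
  have hH : (29 / 51 : ℚ) + 6 * 0.6931471808 < harmonic 63 := by norm_num [harmonic_succ]
  have hlog : log 64 < 6 * 0.6931471808 := by
    rw [show (64 : ℝ) = 2 ^ 6 by norm_num, log_pow]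
    linarith [log_two_lt_d9]
  calc (29 / 51 : ℝ) < harmonic 63 - log 64 := by
        have := Rat.cast_lt (K := ℝ) |>.2 hH
        push_cast at this
        linarith
    _ = eulerMascheroniSeq 63 := by norm_num [eulerMascheroniSeq]
    _ < eulerMascheroniConstant := eulerMascheroniSeq_lt_eulerMascheroniConstant 63

theorem Real.exp_eulerMascheroniConstant_gt : 1.76 < exp eulerMascheroniConstant :=
  (lt_exp_of_pow_lt (p := 29) (q := 51) (by norm_num) (by norm_num) (by norm_num)
    (by norm_num)).trans (exp_lt_exp.2 eulerMascheroniConstant_gt)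

theorem Nat.Coprime.cast_div_totient_mul {m n : ℕ} (h : m.Coprime n) :
    ((m * n : ℕ) : ℝ) / (m * n).totient = (m / m.totient) * (n / n.totient) := by
  rw [Nat.totient_mul h]
  push_cast
  exact mul_div_mul_comm _ _ _ _

theorem Nat.Prime.cast_div_totient_pow {p : ℕ} (hp : p.Prime) (k : ℕ) :
    ((p ^ k : ℕ) : ℝ) / (p ^ k).totient = if k = 0 then 1 else (p : ℝ) / (p - 1) := by
  rcases k with _ | k
  · simp
  have hp1 : (p : ℝ) - 1 ≠ 0 := sub_ne_zero.2 (by exact_mod_cast hp.one_lt.ne')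
  have hpk : (p : ℝ) ^ k ≠ 0 := pow_ne_zero _ (by exact_mod_cast hp.ne_zero)
  rw [Nat.totient_prime_pow_succ hp, if_neg k.succ_ne_zero]
  push_cast [Nat.cast_sub hp.one_le]
  field_simp
  ring

theorem div_sub_one_le_div_sub_one {m x : ℝ} (hm : 1 < m) (h : m ≤ x) :
    x / (x - 1) ≤ m / (m - 1) := by
  rw [div_le_div_iff₀ (by linarith) (by linarith)]
  linarith

theorem cast_div_totient_three_five_le {q : ℕ} (a b c : ℕ) (hq : q.Prime) (hq7 : 7 ≤ q) :
    ((3 ^ a * 5 ^ b * q ^ c : ℕ) : ℝ) / (3 ^ a * 5 ^ b * q ^ c).totient ≤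
      (if a = 0 then 1 else 3 / 2) * (if b = 0 then 1 else 5 / 4) * (7 / 6) := by
  have h3q : Nat.Coprime 3 q := (Nat.coprime_primes Nat.prime_three hq).2 (by omega)
  have h5q : Nat.Coprime 5 q := (Nat.coprime_primes Nat.prime_five hq).2 (by omega)
  have h35 : Nat.Coprime (3 ^ a) (5 ^ b) := Nat.Coprime.pow a b (by norm_num)
  have hq' : (if c = 0 then 1 else (q : ℝ) / (q - 1)) ≤ 7 / 6 := by
    split_ifs
    · norm_num
    · exact (div_sub_one_le_div_sub_one (m := 7) (by norm_num) (by exact_mod_cast hq7)).trans_eq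
        (by norm_num)
  rw [((h3q.pow a c).mul_left (h5q.pow b c)).cast_div_totient_mul, h35.cast_div_totient_mul,
    Nat.prime_three.cast_div_totient_pow, Nat.prime_five.cast_div_totient_pow,
    hq.cast_div_totient_pow]
  calc _ = (if a = 0 then 1 else 3 / 2) * (if b = 0 then 1 else 5 / 4) *
        (if c = 0 then 1 else (q : ℝ) / (q - 1)) := by
        congr 2 <;> split_ifs <;> norm_num
    _ ≤ _ := mul_le_mul_of_nonneg_left hq' (by positivity)

theorem div_totient_lt_of_log_log_gt {n : ℕ} {N R r : ℝ} (hR : (n : ℝ) / n.totient ≤ R)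
    (hRr : R < 1.76 * r) (hr : r < log (log N)) (hN : 1 < N) (hNn : N ≤ n) :
    (n : ℝ) / n.totient < exp eulerMascheroniConstant * log (log n) := by
  have hr0 : 0 < r := by
    have : 0 ≤ (n : ℝ) / n.totient := by positivity
    linarith
  have hmono : log (log N) ≤ log (log n) :=
    log_le_log (log_pos hN) (log_le_log (by linarith) hNn)
  calc (n : ℝ) / n.totient ≤ R := hR
    _ < 1.76 * r := hRr
    _ ≤ exp eulerMascheroniConstant * log (log n) :=
      mul_le_mul exp_eulerMascheroniConstant_gt.le (hr.trans_le hmono).le hr0.le (exp_pos _).le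

theorem totient_special_form (a b c q n : ℕ) (hq : q.Prime) (hq7 : 7 ≤ q)
    (hn : n = 3 ^ a * 5 ^ b * q ^ c)
    (h : n ∉ ({1, 3, 5, 9, 15} : Finset ℕ)) :
    (n : ℝ) / (Nat.totient n) <
      Real.exp Real.eulerMascheroniConstant * Real.log (Real.log n) := by
  have hratio := cast_div_totient_three_five_le a b c hq hq7
  rw [← hn] at hratio
  have hodd : n % 2 = 1 := by
    rw [← Nat.odd_iff, hn]
    exact ((by decide : Odd 3).pow.mul (by decide : Odd 5).pow).mul
      (hq.odd_of_ne_two (by omega)).pow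
  have h3 : a ≠ 0 → 3 ∣ n := fun ha => hn ▸ ((dvd_pow_self 3 ha).mul_right _).mul_right _
  have h5 : b ≠ 0 → 5 ∣ n := fun hb => hn ▸ ((dvd_pow_self 5 hb).mul_left _).mul_right _
  simp only [Finset.mem_insert, Finset.mem_singleton, not_or] at h
  -- `omega` turns oddness, `3 ∣ n`, `5 ∣ n` and the excluded values into the lower bounds on `n`.
  by_cases ha : a = 0 <;> by_cases hb : b = 0 <;> simp only [ha, hb, if_true, if_false] at hratio
  · exact div_totient_lt_of_log_log_gt hratio (by norm_num) log_log_seven_gt (by norm_num)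
      (by exact_mod_cast (by omega : 7 ≤ n))
  · exact div_totient_lt_of_log_log_gt hratio (by norm_num) one_lt_log_log_twenty_one
      (by norm_num) (by exact_mod_cast (by omega : 21 ≤ n))
  · exact div_totient_lt_of_log_log_gt hratio (by norm_num) one_lt_log_log_twenty_one
      (by norm_num) (by exact_mod_cast (by omega : 21 ≤ n))
  · exact div_totient_lt_of_log_log_gt hratio (by norm_num) log_log_thirty_five_gt (by norm_num)
      (by exact_mod_cast (by omega : 35 ≤ n))
end

section
/- For fixed real numbers e > f > 0, the function g(x) = (1 − x^{−e})/(1 − x^{−f}) is strictly decreasing on (1, ∞). -/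
/-!
Substituting `y = x ^ (-f)`, which decreases from `1` to `0` on `(1, ∞)`, turns the ratio into
`(1 - y ^ p) / (1 - y)` with `p = e / f > 1`: the slope of the secant of the strictly convex
function `y ↦ y ^ p` between `y` and `1`, which is strictly increasing in `y`.
-/

open Real Set

theorem strictMonoOn_one_sub_rpow_div_one_sub {p : ℝ} (hp : 1 < p) :
    StrictMonoOn (fun y : ℝ => (1 - y ^ p) / (1 - y)) (Ici 0 \ {1}) := by
  intro y hy z hz hyz
  have hslope := (strictConvexOn_rpow hp).secant_strict_mono (a := 1) (mem_Ici.2 zero_le_one)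
    hy.1 hz.1 hy.2 hz.2 hyz
  have hflip (t : ℝ) : (1 - t ^ p) / (1 - t) = (t ^ p - 1) / (t - 1) := by
    rw [← neg_div_neg_eq, neg_sub, neg_sub]
  simpa only [one_rpow, hflip] using hslope

theorem rpow_neg_rpow_div {x : ℝ} (hx : 0 ≤ x) (e : ℝ) {f : ℝ} (hf : f ≠ 0) :
    (x ^ (-f)) ^ (e / f) = x ^ (-e) := by
  rw [← rpow_mul hx]
  congr 1
  field_simp

theorem mapsTo_rpow_Ioi_one_of_neg {r : ℝ} (hr : r < 0) :
    MapsTo (fun x : ℝ => x ^ r) (Ioi 1) (Ici 0 \ {1}) := fun _x hx =>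
  ⟨rpow_nonneg (zero_le_one.trans hx.le) r, (rpow_lt_one_of_one_lt_of_neg hx hr).ne⟩

theorem strictAntiOn_ratio (e f : ℝ) (hf : 0 < f) (hef : f < e) :
    StrictAntiOn (fun x : ℝ => (1 - x ^ (-e)) / (1 - x ^ (-f))) (Set.Ioi 1) := by
  have hp : 1 < e / f := (one_lt_div hf).2 hef
  have hneg : -f < 0 := neg_neg_of_pos hf
  have hcomp := (strictMonoOn_one_sub_rpow_div_one_sub hp).comp_strictAntiOn
    ((strictAntiOn_rpow_Ioi_of_exponent_neg hneg).mono (Ioi_subset_Ioi zero_le_one))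
    (mapsTo_rpow_Ioi_one_of_neg hneg)
  refine hcomp.congr fun x hx => ?_
  simp only [Function.comp_apply, rpow_neg_rpow_div (zero_le_one.trans hx.le) e hf.ne']
end

section
/- If q > p are primes and f > e are positive integers, then σ(p^f q^e)/(p^f q^e) > σ(p^e q^f)/(p^e q^f). -/
/-!
For `n = p ^ a * q ^ b`, `σ n / n = (∑ i ≤ a, p⁻¹ ^ i) * (∑ j ≤ b, q⁻¹ ^ j)`. Put `x = p⁻¹ > y = q⁻¹`
and `S k z = ∑ i ≤ k, z ^ i`. Splitting `S f = S e + T` and cancelling `S e x * S e y` reduces the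
claim to `S e x * T y < T x * S e y`, which holds term by term: `x ^ j * y ^ i < x ^ i * y ^ j`
whenever `j ≤ e < i`.
-/

open Finset

section
variable {K : Type*} [Field K] [LinearOrder K] [IsStrictOrderedRing K]

theorem pow_mul_pow_lt_pow_mul_pow {x y : K} (hy : 0 < y) (hyx : y < x) {i j : ℕ} (hji : j < i) :
    x ^ j * y ^ i < x ^ i * y ^ j := by
  obtain ⟨k, rfl⟩ := Nat.exists_eq_add_of_lt hji
  have hk : y ^ (k + 1) < x ^ (k + 1) := pow_lt_pow_left₀ hyx hy.le (Nat.succ_ne_zero k)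
  calc x ^ j * y ^ (j + k + 1) = (x ^ j * y ^ j) * y ^ (k + 1) := by ring
    _ < (x ^ j * y ^ j) * x ^ (k + 1) := by gcongr; exact mul_pos (pow_pos (hy.trans hyx) j) (pow_pos hy j)
    _ = x ^ (j + k + 1) * y ^ j := by ring

theorem geom_sum_mul_geom_sum_lt {x y : K} (hy : 0 < y) (hyx : y < x) {e f : ℕ} (hef : e < f) :
    (∑ i ∈ range (e + 1), x ^ i) * ∑ j ∈ range (f + 1), y ^ j <
      (∑ i ∈ range (f + 1), x ^ i) * ∑ j ∈ range (e + 1), y ^ j := by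
  have htail (z : K) : ∑ i ∈ range (f + 1), z ^ i =
      ∑ i ∈ range (e + 1), z ^ i + ∑ i ∈ Ico (e + 1) (f + 1), z ^ i :=
    (sum_range_add_sum_Ico _ (by omega)).symm
  have hcross : (∑ j ∈ range (e + 1), x ^ j) * ∑ i ∈ Ico (e + 1) (f + 1), y ^ i <
      (∑ i ∈ Ico (e + 1) (f + 1), x ^ i) * ∑ j ∈ range (e + 1), y ^ j := by
    rw [sum_mul_sum, sum_mul_sum, sum_comm]
    refine sum_lt_sum_of_nonempty ⟨e + 1, by simp [hef]⟩ fun i hi => ?_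
    refine sum_lt_sum_of_nonempty ⟨0, by simp⟩ fun j hj => ?_
    simp only [mem_Ico, mem_range] at hi hj
    exact pow_mul_pow_lt_pow_mul_pow hy hyx (by omega)
  rw [htail x, htail y]
  linarith
end

theorem geom_sum_div_pow {K : Type*} [Field K] {c : K} (hc : c ≠ 0) (k : ℕ) :
    (∑ i ∈ range (k + 1), c ^ i) / c ^ k = ∑ i ∈ range (k + 1), c⁻¹ ^ i := by
  rw [sum_div, ← sum_range_reflect]
  refine sum_congr rfl fun i hi => ?_
  rw [Nat.add_sub_cancel, inv_pow, pow_sub₀ c hc (by simpa [Nat.lt_succ_iff] using hi)]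
  field_simp

theorem sum_divisors_prime_pow_mul_prime_pow_div {p q : ℕ} (hp : p.Prime) (hq : q.Prime)
    (hpq : p ≠ q) (a b : ℕ) :
    ((∑ d ∈ (p ^ a * q ^ b).divisors, d : ℕ) : ℝ) / ((p : ℝ) ^ a * (q : ℝ) ^ b) =
      (∑ i ∈ range (a + 1), (p : ℝ)⁻¹ ^ i) * ∑ j ∈ range (b + 1), (q : ℝ)⁻¹ ^ j := by
  have hcop : (p ^ a).Coprime (q ^ b) := ((Nat.coprime_primes hp hq).mpr hpq).pow a b
  rw [hcop.sum_divisors_mul, Nat.sum_divisors_prime_pow hp, Nat.sum_divisors_prime_pow hq]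
  push_cast
  rw [mul_div_mul_comm, geom_sum_div_pow (by exact_mod_cast hp.ne_zero),
    geom_sum_div_pow (by exact_mod_cast hq.ne_zero)]

theorem sigma_ratio_swap_general (p q e f : ℕ) (hp : p.Prime) (hq : q.Prime) (hpq : p < q)
    (hef : e < f) :
    ((∑ d ∈ (p ^ e * q ^ f).divisors, d : ℕ) : ℝ) / ((p : ℝ) ^ e * (q : ℝ) ^ f) <
      ((∑ d ∈ (p ^ f * q ^ e).divisors, d : ℕ) : ℝ) / ((p : ℝ) ^ f * (q : ℝ) ^ e) := by
  rw [sum_divisors_prime_pow_mul_prime_pow_div hp hq hpq.ne,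
    sum_divisors_prime_pow_mul_prime_pow_div hp hq hpq.ne]
  have hp0 : (0 : ℝ) < p := by exact_mod_cast hp.pos
  exact geom_sum_mul_geom_sum_lt (inv_pos.mpr (hp0.trans (by exact_mod_cast hpq)))
    (inv_strictAnti₀ hp0 (by exact_mod_cast hpq)) hef

theorem sigma_ratio_swap (p q e f : ℕ) (hp : p.Prime) (hq : q.Prime) (hpq : p < q)
    (he : 0 < e) (hef : e < f) :
    ((∑ d ∈ (p ^ e * q ^ f).divisors, d : ℕ) : ℝ) / ((p : ℝ) ^ e * (q : ℝ) ^ f) <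
      ((∑ d ∈ (p ^ f * q ^ e).divisors, d : ℕ) : ℝ) / ((p : ℝ) ^ f * (q : ℝ) ^ e) :=
  sigma_ratio_swap_general p q e f hp hq hpq hef
end

section
/- If n has prime factorization with exponent pattern ē = (e_1 ≥ e_2 ≥ ⋯ ≥ e_s) and m(ē) = ∏_{i=1}^s p_i^{e_i} with p_i the i-th prime, then σ(n)/n ≤ σ(m(ē))/m(ē). -/
open Finset

noncomputable def rr (p a : ℕ) : ℝ := ∑ j ∈ Finset.range (a + 1), ((p : ℝ)⁻¹) ^ j

lemma rr_nonneg (p a : ℕ) : 0 ≤ rr p a := by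
  apply Finset.sum_nonneg
  intro j _
  positivity

lemma rr_anti_base {p q : ℕ} (hq : 0 < q) (hqp : q ≤ p) (a : ℕ) : rr p a ≤ rr q a := by
  apply Finset.sum_le_sum
  intro j _
  apply pow_le_pow_left₀ (by positivity)
  apply inv_anti₀ (by exact_mod_cast hq)
  exact_mod_cast hqp

lemma pow_cross {t u : ℝ} (ht : 0 ≤ t) (htu : t ≤ u) {k j : ℕ} (hkj : k ≤ j) :
    t ^ j * u ^ k ≤ u ^ j * t ^ k := by
  obtain ⟨d, rfl⟩ : ∃ d, j = k + d := ⟨j - k, by omega⟩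
  have hu : 0 ≤ u := le_trans ht htu
  have h1 : t ^ d ≤ u ^ d := pow_le_pow_left₀ ht htu d
  calc t ^ (k + d) * u ^ k = t ^ d * (t ^ k * u ^ k) := by rw [pow_add]; ring
    _ ≤ u ^ d * (t ^ k * u ^ k) := mul_le_mul_of_nonneg_right h1 (by positivity)
    _ = u ^ (k + d) * t ^ k := by rw [pow_add]; ring

lemma rr_exchange {p q a b : ℕ} (hq : 0 < q) (hqp : q ≤ p) (hab : a ≤ b) :
    rr p b * rr q a ≤ rr p a * rr q b := by
  have hp : 0 < p := lt_of_lt_of_le hq hqp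
  set t : ℝ := (p : ℝ)⁻¹ with hT
  set u : ℝ := (q : ℝ)⁻¹ with hU
  have ht : 0 ≤ t := by positivity
  have htu : t ≤ u := by
    apply inv_anti₀ (by exact_mod_cast hq)
    exact_mod_cast hqp
  have hsplit : ∀ x : ℝ, (∑ j ∈ Finset.range (b + 1), x ^ j) =
      (∑ j ∈ Finset.range (a + 1), x ^ j) + ∑ j ∈ Finset.Ico (a + 1) (b + 1), x ^ j := by
    intro x
    rw [Finset.range_eq_Ico, Finset.range_eq_Ico]
    exact (Finset.sum_Ico_consecutive _ (Nat.zero_le (a + 1)) (by omega : a + 1 ≤ b + 1)).symm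
  have key : (∑ j ∈ Finset.Ico (a + 1) (b + 1), t ^ j) * rr q a ≤
      rr p a * ∑ j ∈ Finset.Ico (a + 1) (b + 1), u ^ j := by
    calc (∑ j ∈ Finset.Ico (a + 1) (b + 1), t ^ j) * rr q a
        = ∑ j ∈ Finset.Ico (a + 1) (b + 1), ∑ k ∈ Finset.range (a + 1), t ^ j * u ^ k :=
          Finset.sum_mul_sum _ _ _ _
      _ ≤ ∑ j ∈ Finset.Ico (a + 1) (b + 1), ∑ k ∈ Finset.range (a + 1), u ^ j * t ^ k := by
          apply Finset.sum_le_sum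
          intro j hj
          apply Finset.sum_le_sum
          intro k hk
          have hkj : k ≤ j := by
            simp only [Finset.mem_Ico] at hj
            simp only [Finset.mem_range] at hk
            omega
          exact pow_cross ht htu hkj
      _ = (∑ j ∈ Finset.Ico (a + 1) (b + 1), u ^ j) * rr p a := (Finset.sum_mul_sum _ _ _ _).symm
      _ = rr p a * ∑ j ∈ Finset.Ico (a + 1) (b + 1), u ^ j := mul_comm _ _
  have e1 : rr p b = rr p a + ∑ j ∈ Finset.Ico (a + 1) (b + 1), t ^ j := hsplit t
  have e2 : rr q b = rr q a + ∑ j ∈ Finset.Ico (a + 1) (b + 1), u ^ j := hsplit u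
  rw [e1, e2]
  nlinarith [key]

lemma rr_eq {p : ℕ} (hp : 0 < p) (a : ℕ) :
    ((∑ k ∈ Finset.range (a + 1), p ^ k : ℕ) : ℝ) / ((p : ℝ) ^ a) = rr p a := by
  have hp0 : (0 : ℝ) < (p : ℝ) := by exact_mod_cast hp
  rw [div_eq_iff (by positivity)]
  push_cast
  have key : rr p a * (p : ℝ) ^ a = ∑ k ∈ Finset.range (a + 1), (p : ℝ) ^ k := by
    unfold rr
    rw [Finset.sum_mul]
    conv_rhs => rw [← Finset.sum_range_reflect (fun k => (p : ℝ) ^ k) (a + 1)]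
    apply Finset.sum_congr rfl
    intro j hj
    have hj' : j ≤ a := by simpa [Nat.lt_succ_iff] using hj
    have hsp : (p : ℝ) ^ (a + 1 - 1 - j) * (p : ℝ) ^ j = (p : ℝ) ^ a := by
      rw [← pow_add]; congr 1; omega
    rw [← hsp, inv_pow, mul_comm ((p:ℝ)^(a+1-1-j)) _, ← mul_assoc,
      inv_mul_cancel₀ (by positivity), one_mul]
  exact key.symm

lemma rr_eq' {p : ℕ} (hp : 0 < p) (a : ℕ) :
    (∑ k ∈ Finset.range (a + 1), (p : ℝ) ^ k) / ((p : ℝ) ^ a) = rr p a := by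
  rw [← rr_eq hp a]
  push_cast
  rfl

/-- Rearrangement-type inequality. -/
lemma rearr : ∀ (s : ℕ) (h : Fin s → ℕ → ℝ), (∀ i a, 0 ≤ h i a) →
    (∀ (i j : Fin s) (a b : ℕ), i ≤ j → a ≤ b → h j b * h i a ≤ h j a * h i b) →
    ∀ (e f : Fin s → ℕ), Antitone e →
    Multiset.map f Finset.univ.val = Multiset.map e Finset.univ.val →
    ∏ i, h i (f i) ≤ ∏ i, h i (e i) := by
  intro s
  induction s with
  | zero => intro h _ _ e f _ _; simp
  | succ s ih =>
    intro h hpos hex e f he hm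
    -- find position j with f j = e 0
    have h0mem : e 0 ∈ Multiset.map f Finset.univ.val := by
      rw [hm]
      exact Multiset.mem_map_of_mem _ (Finset.mem_univ_val _)
    obtain ⟨j, -, hj⟩ := Multiset.mem_map.mp h0mem
    -- every value of f is ≤ e 0
    have hfle : ∀ i, f i ≤ e 0 := by
      intro i
      have : f i ∈ Multiset.map e Finset.univ.val := by
        rw [← hm]; exact Multiset.mem_map_of_mem _ (Finset.mem_univ_val _)
      obtain ⟨k, -, hk⟩ := Multiset.mem_map.mp this
      rw [← hk]
      exact he (Fin.zero_le k)
    set g : Fin (s + 1) → ℕ := f ∘ (Equiv.swap 0 j) with hg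
    have hswapuniv : Multiset.map (⇑(Equiv.swap (0 : Fin (s+1)) j)) Finset.univ.val
        = Finset.univ.val := by
      have := congrArg Finset.val (Finset.map_univ_equiv (Equiv.swap (0 : Fin (s+1)) j))
      simpa [Finset.map_val] using this
    have hgm : Multiset.map g Finset.univ.val = Multiset.map f Finset.univ.val := by
      rw [hg]
      rw [show Multiset.map (f ∘ ⇑(Equiv.swap 0 j)) Finset.univ.val
          = Multiset.map f (Multiset.map (⇑(Equiv.swap 0 j)) Finset.univ.val) from
        (Multiset.map_map f _ _).symm]
      rw [hswapuniv]
    have hg0 : g 0 = e 0 := by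
      simp only [hg, Function.comp_apply, Equiv.swap_apply_left]
      exact hj
    -- step 1 : product for f ≤ product for g
    have step1 : ∏ i, h i (f i) ≤ ∏ i, h i (g i) := by
      rcases eq_or_ne j 0 with rfl | hj0
      · have : g = f := by
          funext i; simp [hg, Equiv.swap_self]
        rw [this]
      · have h0u : (0 : Fin (s+1)) ∈ (Finset.univ : Finset (Fin (s+1))) := Finset.mem_univ _
        have hju : j ∈ (Finset.univ : Finset (Fin (s+1))).erase 0 :=
          Finset.mem_erase.mpr ⟨hj0, Finset.mem_univ _⟩
        have expand : ∀ F : Fin (s+1) → ℕ,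
            ∏ i, h i (F i) = h 0 (F 0) * (h j (F j) *
              ∏ i ∈ ((Finset.univ : Finset (Fin (s+1))).erase 0).erase j, h i (F i)) := by
          intro F
          rw [← Finset.mul_prod_erase _ _ h0u, ← Finset.mul_prod_erase _ (fun i => h i (F i)) hju]
        rw [expand f, expand g]
        have hrest : ∏ i ∈ ((Finset.univ : Finset (Fin (s+1))).erase 0).erase j, h i (g i)
            = ∏ i ∈ ((Finset.univ : Finset (Fin (s+1))).erase 0).erase j, h i (f i) := by
          apply Finset.prod_congr rfl
          intro i hi
          simp only [Finset.mem_erase] at hi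
          simp [hg, Equiv.swap_apply_of_ne_of_ne hi.2.1 hi.1]
        rw [hrest]
        have hgj : g j = f 0 := by simp [hg, Equiv.swap_apply_right]
        have hexch : h j (f j) * h 0 (f 0) ≤ h j (f 0) * h 0 (f j) := by
          have := hex 0 j (f 0) (f j) (Fin.zero_le j) (hj ▸ hfle 0)
          exact this
        have hR : 0 ≤ ∏ i ∈ ((Finset.univ : Finset (Fin (s+1))).erase 0).erase j, h i (f i) :=
          Finset.prod_nonneg fun i _ => hpos i _
        have hg0' : g 0 = f j := by simp [hg, Equiv.swap_apply_left]
        rw [hg0', hgj]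
        nlinarith [hexch, hR, hpos 0 (f 0), hpos j (f j), hpos j (f 0), hpos 0 (f j)]
    -- step 2 : induction on the tail
    have huniv : (Finset.univ : Finset (Fin (s+1))).val
        = 0 ::ₘ Multiset.map Fin.succ (Finset.univ : Finset (Fin s)).val := by
      rw [Fin.univ_succ, Finset.cons_val, Finset.map_val]
      rfl
    have htail : Multiset.map (g ∘ Fin.succ) Finset.univ.val
        = Multiset.map (e ∘ Fin.succ) Finset.univ.val := by
      have hge : Multiset.map g Finset.univ.val = Multiset.map e Finset.univ.val := by
        rw [hgm, hm]
      rw [huniv] at hge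
      simp only [Multiset.map_cons, Multiset.map_map, hg0] at hge
      exact (Multiset.cons_inj_right _).mp hge
    have ihres := ih (fun i => h i.succ) (fun i a => hpos i.succ a)
      (fun i j a b hij hab => hex i.succ j.succ a b (Fin.succ_le_succ_iff.mpr hij) hab)
      (e ∘ Fin.succ) (g ∘ Fin.succ)
      (fun a b hab => he (Fin.succ_le_succ_iff.mpr hab))
      htail
    calc ∏ i, h i (f i) ≤ ∏ i, h i (g i) := step1
      _ = h 0 (g 0) * ∏ i : Fin s, h i.succ (g i.succ) := Fin.prod_univ_succ (fun i => h i (g i))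
      _ ≤ h 0 (e 0) * ∏ i : Fin s, h i.succ (e i.succ) := by
          rw [hg0]
          exact mul_le_mul_of_nonneg_left ihres (hpos 0 (e 0))
      _ = ∏ i, h i (e i) := (Fin.prod_univ_succ (fun i => h i (e i))).symm

lemma nth_prime_le_of_strictMono {s : ℕ} (q : Fin s → ℕ) (hq : StrictMono q)
    (hp : ∀ i, (q i).Prime) (i : Fin s) : Nat.nth Nat.Prime i ≤ q i := by
  have key : ∀ m : ℕ, ∀ him : m < s, m ≤ Nat.count Nat.Prime (q ⟨m, him⟩) := by
    intro m
    induction m with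
    | zero => intro _; exact Nat.zero_le _
    | succ k ihk =>
      intro him
      have hk : k < s := by omega
      have h1 : q ⟨k, hk⟩ < q ⟨k + 1, him⟩ := hq (by simp [Fin.lt_def])
      have h2 : Nat.count Nat.Prime (q ⟨k, hk⟩ + 1) = Nat.count Nat.Prime (q ⟨k, hk⟩) + 1 := by
        rw [Nat.count_succ, if_pos (hp _)]
      have h3 := Nat.count_monotone Nat.Prime (show q ⟨k, hk⟩ + 1 ≤ q ⟨k + 1, him⟩ from h1)
      have h4 := ihk hk
      omega
  have h5 : (i : ℕ) ≤ Nat.count Nat.Prime (q i) := by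
    have := key i i.isLt
    simpa using this
  calc Nat.nth Nat.Prime i ≤ Nat.nth Nat.Prime (Nat.count Nat.Prime (q i)) :=
        Nat.nth_monotone Nat.infinite_setOf_prime h5
    _ = q i := Nat.nth_count (hp i)

theorem sigma_ratio_le_pattern (n s : ℕ) (hn : 0 < n) (e : Fin s → ℕ) (he : Antitone e)
    (hpat : Multiset.map (⇑n.factorization) n.primeFactors.val =
      Multiset.map e Finset.univ.val) :
    ((∑ d ∈ n.divisors, d : ℕ) : ℝ) / n ≤
      ((∑ d ∈ (∏ i : Fin s, Nat.nth Nat.Prime i ^ e i).divisors, d : ℕ) : ℝ) /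
        (∏ i : Fin s, Nat.nth Nat.Prime i ^ e i) := by
  classical
  set m := ∏ i : Fin s, Nat.nth Nat.Prime i ^ e i with hmdef
  have hnthp : ∀ i : Fin s, (Nat.nth Nat.Prime i).Prime := fun i => Nat.prime_nth_prime i
  have hcard : n.primeFactors.card = s := by
    have := congrArg Multiset.card hpat
    simpa using this
  set q := n.primeFactors.orderEmbOfFin hcard with hqdef
  have hqmem : ∀ i, q i ∈ n.primeFactors := fun i => Finset.orderEmbOfFin_mem _ hcard i
  have hqprime : ∀ i, (q i).Prime := fun i => Nat.prime_of_mem_primeFactors (hqmem i)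
  have hqpos : ∀ i, 0 < q i := fun i => (hqprime i).pos
  set f : Fin s → ℕ := fun i => n.factorization (q i) with hf
  have hquniv : Finset.univ.map q.toEmbedding = n.primeFactors := by
    apply Finset.coe_injective
    simp only [Finset.coe_map, Finset.coe_univ, Set.image_univ]
    exact Finset.range_orderEmbOfFin _ hcard
  have hmultif : Multiset.map f Finset.univ.val = Multiset.map e Finset.univ.val := by
    have h1 : Multiset.map f Finset.univ.val
        = Multiset.map (⇑n.factorization) n.primeFactors.val := by
      rw [← hquniv, Finset.map_val, Multiset.map_map]
      rfl
    rw [h1, hpat]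
  have hn_eq : ∏ p ∈ n.primeFactors, p ^ n.factorization p = n := by
    rw [← Nat.support_factorization]
    exact Nat.factorization_prod_pow_eq_self hn.ne'
  have c1 : ((∑ d ∈ n.divisors, d : ℕ) : ℝ)
      = ∏ p ∈ n.primeFactors, ∑ k ∈ Finset.range (n.factorization p + 1), (p : ℝ) ^ k := by
    rw [Nat.sum_divisors hn.ne']
    push_cast
    rfl
  have c2 : (n : ℝ) = ∏ p ∈ n.primeFactors, (p : ℝ) ^ n.factorization p := by
    conv_lhs => rw [← hn_eq]
    push_cast
    rfl
  have hratio_n : ((∑ d ∈ n.divisors, d : ℕ) : ℝ) / n = ∏ i : Fin s, rr (q i) (f i) := by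
    rw [c1, c2, ← Finset.prod_div_distrib, ← hquniv, Finset.prod_map]
    exact Finset.prod_congr rfl fun i _ => rr_eq' (hqpos i) _
  have hpair : ((Finset.univ : Finset (Fin s)) : Set (Fin s)).Pairwise
      (Function.onFun Nat.Coprime fun i : Fin s => Nat.nth Nat.Prime i ^ e i) := by
    intro i _ j _ hij
    have hne : Nat.nth Nat.Prime i ≠ Nat.nth Nat.Prime j := by
      intro hcontra
      exact hij (Fin.ext ((Nat.nth_strictMono Nat.infinite_setOf_prime).injective hcontra))
    exact Nat.Coprime.pow _ _ ((Nat.coprime_primes (hnthp i) (hnthp j)).mpr hne)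
  have hsum_m : (∑ d ∈ m.divisors, d)
      = ∏ i : Fin s, ∑ k ∈ Finset.range (e i + 1), Nat.nth Nat.Prime i ^ k := by
    rw [← ArithmeticFunction.sigma_one_apply, hmdef,
      ArithmeticFunction.isMultiplicative_sigma.map_prod _ Finset.univ hpair]
    exact Finset.prod_congr rfl fun i _ =>
      ArithmeticFunction.sigma_one_apply_prime_pow (hnthp i)
  have c3 : ((∑ d ∈ m.divisors, d : ℕ) : ℝ)
      = ∏ i : Fin s, ∑ k ∈ Finset.range (e i + 1), (Nat.nth Nat.Prime i : ℝ) ^ k := by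
    rw [hsum_m]
    push_cast
    rfl
  have c4 : (m : ℝ) = ∏ i : Fin s, (Nat.nth Nat.Prime i : ℝ) ^ e i := by
    rw [hmdef]
    push_cast
    rfl
  have hratio_m : ((∑ d ∈ m.divisors, d : ℕ) : ℝ) / m
      = ∏ i : Fin s, rr (Nat.nth Nat.Prime i) (e i) := by
    rw [c3, c4, ← Finset.prod_div_distrib]
    exact Finset.prod_congr rfl fun i _ => rr_eq' (hnthp i).pos _
  rw [hratio_n, hratio_m]
  calc ∏ i : Fin s, rr (q i) (f i)
      ≤ ∏ i : Fin s, rr (Nat.nth Nat.Prime i) (f i) := by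
        apply Finset.prod_le_prod (fun i _ => rr_nonneg _ _)
        intro i _
        exact rr_anti_base (hnthp i).pos
          (nth_prime_le_of_strictMono (⇑q) q.strictMono hqprime i) _
    _ ≤ ∏ i : Fin s, rr (Nat.nth Nat.Prime i) (e i) := by
        apply rearr s (fun i => rr (Nat.nth Nat.Prime i)) (fun i a => rr_nonneg _ _)
          (fun i j a b hij hab =>
            rr_exchange (hnthp i).pos
              (Nat.nth_monotone Nat.infinite_setOf_prime hij) hab)
          e f he hmultif
end

section
/- If n has exponent pattern ē and σ(m(ē))/m(ē) < e^γ · log log m(ē), then σ(n)/n < e^γ · log log n. -/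
open Finset

noncomputable def Sg (x : ℝ) (a : ℕ) : ℝ := ∑ j ∈ Finset.range (a + 1), x ^ j

lemma one_le_Sg {x : ℝ} (hx : 0 ≤ x) (a : ℕ) : 1 ≤ Sg x a := by
  rw [Sg, Finset.sum_range_succ']
  simp only [pow_zero]
  have : 0 ≤ ∑ i ∈ Finset.range a, x ^ (i + 1) :=
    Finset.sum_nonneg fun i _ => pow_nonneg hx _
  linarith

lemma Sg_pos {x : ℝ} (hx : 0 ≤ x) (a : ℕ) : 0 < Sg x a :=
  lt_of_lt_of_le one_pos (one_le_Sg hx a)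

lemma Sg_mono {x y : ℝ} (h0 : 0 ≤ x) (hxy : x ≤ y) (a : ℕ) : Sg x a ≤ Sg y a :=
  Finset.sum_le_sum fun j _ => pow_le_pow_left₀ h0 hxy j

lemma Sg_succ (x : ℝ) (t : ℕ) : Sg x (t + 1) = Sg x t + x ^ (t + 1) := by
  rw [Sg, Sg, Finset.sum_range_succ]

lemma Sg_ratio {x y : ℝ} (hy : 0 ≤ y) (hxy : y ≤ x) (t : ℕ) :
    Sg y (t + 1) * Sg x t ≤ Sg x (t + 1) * Sg y t := by
  rw [Sg_succ, Sg_succ]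
  have key : y ^ (t + 1) * Sg x t ≤ x ^ (t + 1) * Sg y t := by
    rw [Sg, Sg, Finset.mul_sum, Finset.mul_sum]
    apply Finset.sum_le_sum
    intro k hk
    rw [Finset.mem_range] at hk
    obtain ⟨c, hc⟩ : ∃ c, t + 1 = k + c := ⟨t + 1 - k, by omega⟩
    have hx0 : 0 ≤ x := hy.trans hxy
    rw [hc, pow_add, pow_add]
    calc y ^ k * y ^ c * x ^ k = (x ^ k * y ^ k) * y ^ c := by ring
      _ ≤ (x ^ k * y ^ k) * x ^ c := mul_le_mul_of_nonneg_left
          (pow_le_pow_left₀ hy hxy c) (mul_nonneg (pow_nonneg hx0 k) (pow_nonneg hy k))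
      _ = x ^ k * x ^ c * y ^ k := by ring
  nlinarith [key]

lemma geom_div {x : ℝ} (hx : x ≠ 0) (a : ℕ) :
    (∑ j ∈ Finset.range (a + 1), x ^ j) / x ^ a = Sg x⁻¹ a := by
  rw [Sg, ← Finset.sum_range_reflect, Finset.sum_div]
  apply Finset.sum_congr rfl
  intro j hj
  rw [Finset.mem_range] at hj
  have hj' : j ≤ a := by omega
  have : a + 1 - 1 - j = a - j := by omega
  rw [this, inv_pow, div_eq_iff (pow_ne_zero a hx), eq_comm,
    inv_mul_eq_iff_eq_mul₀ (pow_ne_zero _ hx), ← pow_add]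
  congr 1
  omega

lemma exists_perm_of_map_eq {α : Type*} [LinearOrder α] {s : ℕ} {f g : Fin s → α}
    (h : Multiset.map f Finset.univ.val = Multiset.map g Finset.univ.val) :
    ∃ π : Equiv.Perm (Fin s), f ∘ π = g := by
  rw [Fin.univ_val_map, Fin.univ_val_map, Multiset.coe_eq_coe] at h
  have h1 : List.Perm (List.ofFn (f ∘ Tuple.sort f)) (List.ofFn (g ∘ Tuple.sort g)) :=
    ((Tuple.sort f).ofFn_comp_perm f).trans (h.trans ((Tuple.sort g).ofFn_comp_perm g).symm)
  have h2 : f ∘ Tuple.sort f = g ∘ Tuple.sort g :=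
    List.ofFn_injective (List.Perm.eq_of_sortedLE
      (List.sortedLE_ofFn_iff.2 (Tuple.monotone_sort f))
      (List.sortedLE_ofFn_iff.2 (Tuple.monotone_sort g)) h1)
  refine ⟨(Tuple.sort g).symm.trans (Tuple.sort f), ?_⟩
  funext i
  have := congrFun h2 ((Tuple.sort g).symm i)
  simpa using this

lemma nth_prime_le {s : ℕ} (q : Fin s → ℕ) (hq : StrictMono q)
    (hprime : ∀ i, (q i).Prime) (i : Fin s) : Nat.nth Nat.Prime i ≤ q i := by
  classical
  have hcount : (i : ℕ) ≤ Nat.count Nat.Prime (q i) := by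
    rw [Nat.count_eq_card_filter_range]
    calc (i : ℕ) = (Finset.range (i : ℕ)).card := (Finset.card_range _).symm
      _ ≤ _ := by
        apply Finset.card_le_card_of_injOn (fun k => if h : k < s then q ⟨k, h⟩ else 0)
        · intro k hk
          rw [Finset.mem_coe, Finset.mem_range] at hk
          have hks : k < s := by omega
          dsimp only
          rw [dif_pos hks]
          rw [Finset.mem_coe, Finset.mem_filter, Finset.mem_range]
          exact ⟨hq (by simpa [Fin.lt_def] using hk), hprime _⟩
        · intro a ha b hb hab
          rw [Finset.mem_coe, Finset.mem_range] at ha hb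
          have has : a < s := by omega
          have hbs : b < s := by omega
          dsimp only at hab
          rw [dif_pos has, dif_pos hbs] at hab
          simpa [Fin.ext_iff] using hq.injective hab
  calc Nat.nth Nat.Prime i ≤ Nat.nth Nat.Prime (Nat.count Nat.Prime (q i)) :=
        Nat.nth_monotone Nat.infinite_setOf_prime hcount
    _ = q i := Nat.nth_count (hprime i)

lemma rearrange {s : ℕ} (e : Fin s → ℕ) (he : Antitone e) (ρ : Equiv.Perm (Fin s))
    (G : Fin s → ℕ → ℝ) (D : Fin s → ℕ → ℝ)
    (hG : ∀ i a, G i a = ∑ t ∈ Finset.range a, D i t)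
    (hD : ∀ (t : ℕ) (i j : Fin s), i ≤ j → D j t ≤ D i t) :
    ∑ i, G i (e (ρ i)) ≤ ∑ i, G i (e i) := by
  classical
  set N := Finset.univ.sup e with hN
  have heN : ∀ i, e i ≤ N := fun i => Finset.le_sup (Finset.mem_univ i)
  have key : ∀ i j : Fin s, G i (e j) = ∑ t ∈ Finset.range N, if t < e j then D i t else 0 := by
    intro i j
    rw [hG, ← Finset.sum_filter]
    congr 1
    ext t
    simp only [Finset.mem_filter, Finset.mem_range]
    have := heN j
    omega
  simp_rw [key]
  rw [Finset.sum_comm]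
  rw [show ∑ i : Fin s, ∑ t ∈ Finset.range N, (if t < e i then D i t else 0)
      = ∑ t ∈ Finset.range N, ∑ i : Fin s, (if t < e i then D i t else 0) from Finset.sum_comm]
  apply Finset.sum_le_sum
  intro t _
  have mono : Monovary (fun i => D i t) (fun i => if t < e i then (1 : ℝ) else 0) := by
    intro i j hij
    dsimp only at hij
    by_cases hi : t < e i
    · rw [if_pos hi] at hij
      by_cases hjj : t < e j
      · rw [if_pos hjj] at hij; exact absurd hij (lt_irrefl _)
      · rw [if_neg hjj] at hij; linarith
    · by_cases hjj : t < e j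
      · have hji : j ≤ i := by
          by_contra hc
          push_neg at hc
          have := he hc.le
          omega
        exact hD t j i hji
      · rw [if_neg hi, if_neg hjj] at hij; exact absurd hij (lt_irrefl _)
  have h := mono.sum_mul_comp_perm_le_sum_mul (σ := ρ)
  simpa [mul_ite, mul_one, mul_zero] using h

lemma sigma_ratio_prod {s : ℕ} (P : Fin s → ℕ) (hP : ∀ i, (P i).Prime)
    (hinj : Function.Injective P) (E : Fin s → ℕ) :
    ((∑ d ∈ (∏ i, P i ^ E i).divisors, d : ℕ) : ℝ) / (∏ i, P i ^ E i) =
      ∏ i, Sg (((P i : ℝ))⁻¹) (E i) := by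
  rw [← ArithmeticFunction.sigma_one_apply]
  rw [ArithmeticFunction.IsMultiplicative.map_prod _ ArithmeticFunction.isMultiplicative_sigma
    Finset.univ ?_]
  · push_cast
    rw [← Finset.prod_div_distrib]
    apply Finset.prod_congr rfl
    intro i _
    rw [ArithmeticFunction.sigma_one_apply_prime_pow (hP i)]
    push_cast
    exact geom_div (by exact_mod_cast (hP i).ne_zero) (E i)
  · intro i _ j _ hij
    simp only [Function.onFun]
    exact Nat.Coprime.pow _ _ ((Nat.coprime_primes (hP i) (hP j)).2 (fun he => hij (hinj he)))

theorem robin_of_pattern (n s : ℕ) (hn : 0 < n) (e : Fin s → ℕ) (he : Antitone e)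
    (hpat : Multiset.map (⇑n.factorization) n.primeFactors.val =
      Multiset.map e Finset.univ.val)
    (m : ℕ) (hm : m = ∏ i : Fin s, Nat.nth Nat.Prime i ^ e i) (hm2 : 2 ≤ m)
    (h : ((∑ d ∈ m.divisors, d : ℕ) : ℝ) / m <
      Real.exp Real.eulerMascheroniConstant * Real.log (Real.log m)) :
    ((∑ d ∈ n.divisors, d : ℕ) : ℝ) / n <
      Real.exp Real.eulerMascheroniConstant * Real.log (Real.log n) := by
  classical
  -- setup
  have hcard : n.primeFactors.card = s := by
    have h1 := congrArg Multiset.card hpat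
    simpa using h1
  set q : Fin s → ℕ := fun i => ((n.primeFactors.orderIsoOfFin hcard) i : ℕ) with hqdef
  have hqmono : StrictMono q := fun i j hij =>
    Subtype.coe_lt_coe.2 ((n.primeFactors.orderIsoOfFin hcard).strictMono hij)
  have hqmem : ∀ i, q i ∈ n.primeFactors := fun i => ((n.primeFactors.orderIsoOfFin hcard) i).2
  have hqprime : ∀ i, (q i).Prime := fun i => Nat.prime_of_mem_primeFactors (hqmem i)
  have himg : Finset.univ.map ⟨q, hqmono.injective⟩ = n.primeFactors := by
    apply Finset.eq_of_subset_of_card_le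
    · intro x hx
      rw [Finset.mem_map] at hx
      obtain ⟨i, _, rfl⟩ := hx
      exact hqmem i
    · rw [hcard]; simp
  have hval : n.primeFactors.val = Multiset.map q Finset.univ.val := by
    rw [← himg, Finset.map_val]
    rfl
  have hmap : Multiset.map e Finset.univ.val =
      Multiset.map (fun i => n.factorization (q i)) Finset.univ.val := by
    rw [← hpat, hval, Multiset.map_map]
    rfl
  obtain ⟨ρ, hρ⟩ := exists_perm_of_map_eq hmap
  have hexp : ∀ i, e (ρ i) = n.factorization (q i) := fun i => congrFun hρ i
  -- n as a product
  have hnprod : n = ∏ i, q i ^ e (ρ i) := by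
    conv_lhs => rw [← Nat.factorization_prod_pow_eq_self hn.ne']
    rw [Finsupp.prod, Nat.support_factorization, ← himg, Finset.prod_map]
    apply Finset.prod_congr rfl
    intro i _
    rw [hexp i]
    rfl
  set p : Fin s → ℕ := fun i => Nat.nth Nat.Prime i with hpdef
  have hpprime : ∀ i, (p i).Prime := fun i => Nat.prime_nth_prime i
  have hpinj : Function.Injective p := by
    intro i j hij
    exact Fin.ext (Nat.nth_injective Nat.infinite_setOf_prime hij)
  have hpmono : ∀ i j : Fin s, i ≤ j → p i ≤ p j := fun i j hij =>
    Nat.nth_monotone Nat.infinite_setOf_prime (by exact_mod_cast hij)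
  have hple : ∀ i, p i ≤ q i := nth_prime_le q hqmono hqprime
  -- positivity
  have hqpos : ∀ i, (0:ℝ) < (q i : ℝ) := fun i => by exact_mod_cast (hqprime i).pos
  have hppos : ∀ i, (0:ℝ) < (p i : ℝ) := fun i => by exact_mod_cast (hpprime i).pos
  -- sigma ratios
  have hσn : ((∑ d ∈ n.divisors, d : ℕ) : ℝ) / n = ∏ i, Sg ((q i : ℝ))⁻¹ (e (ρ i)) := by
    have := sigma_ratio_prod q hqprime hqmono.injective (fun i => e (ρ i))
    rw [← hnprod] at this
    exact this
  have hσm : ((∑ d ∈ m.divisors, d : ℕ) : ℝ) / m = ∏ i, Sg ((p i : ℝ))⁻¹ (e i) := by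
    have := sigma_ratio_prod p hpprime hpinj e
    rw [← hm] at this
    exact this
  -- step 1 : replace q by p
  have step1 : ∏ i, Sg ((q i : ℝ))⁻¹ (e (ρ i)) ≤ ∏ i, Sg ((p i : ℝ))⁻¹ (e (ρ i)) := by
    apply Finset.prod_le_prod
    · intro i _
      exact (Sg_pos (by positivity) _).le
    · intro i _
      apply Sg_mono (by positivity)
      apply inv_anti₀ (hppos i)
      exact_mod_cast hple i
  -- step 2 : rearrangement
  have step2 : ∏ i, Sg ((p i : ℝ))⁻¹ (e (ρ i)) ≤ ∏ i, Sg ((p i : ℝ))⁻¹ (e i) := by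
    have hxpos : ∀ i : Fin s, (0:ℝ) < ((p i : ℝ))⁻¹ := fun i => inv_pos.2 (hppos i)
    have hlog : ∑ i, Real.log (Sg ((p i : ℝ))⁻¹ (e (ρ i))) ≤
        ∑ i, Real.log (Sg ((p i : ℝ))⁻¹ (e i)) := by
      refine rearrange e he ρ (fun i a => Real.log (Sg ((p i : ℝ))⁻¹ a))
        (fun i t => Real.log (Sg ((p i : ℝ))⁻¹ (t + 1)) - Real.log (Sg ((p i : ℝ))⁻¹ t)) ?_ ?_
      · intro i a
        rw [Finset.sum_range_sub (fun t => Real.log (Sg ((p i : ℝ))⁻¹ t)) a]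
        have h0 : Sg ((p i : ℝ))⁻¹ 0 = 1 := by simp [Sg]
        rw [h0, Real.log_one, sub_zero]
      · intro t i j hij
        have hxy : ((p j : ℝ))⁻¹ ≤ ((p i : ℝ))⁻¹ := by
          apply inv_anti₀ (hppos i)
          exact_mod_cast hpmono i j hij
        have h1 := Sg_ratio (hxpos j).le hxy t
        have hpos1 : 0 < Sg ((p j : ℝ))⁻¹ (t + 1) * Sg ((p i : ℝ))⁻¹ t :=
          mul_pos (Sg_pos (hxpos j).le _) (Sg_pos (hxpos i).le _)
        have h2 := Real.log_le_log hpos1 h1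
        rw [Real.log_mul (Sg_pos (hxpos j).le _).ne' (Sg_pos (hxpos i).le _).ne',
          Real.log_mul (Sg_pos (hxpos i).le _).ne' (Sg_pos (hxpos j).le _).ne'] at h2
        linarith
    have hp1 : (0:ℝ) < ∏ i, Sg ((p i : ℝ))⁻¹ (e (ρ i)) :=
      Finset.prod_pos fun i _ => Sg_pos (by positivity) _
    have hp2 : (0:ℝ) < ∏ i, Sg ((p i : ℝ))⁻¹ (e i) :=
      Finset.prod_pos fun i _ => Sg_pos (by positivity) _
    apply (Real.log_le_log_iff hp1 hp2).1
    rw [Real.log_prod (fun i _ => (Sg_pos (by positivity) _).ne'),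
      Real.log_prod (fun i _ => (Sg_pos (by positivity) _).ne')]
    exact hlog
  -- log m ≤ log n
  have hlm : Real.log m = ∑ i, (e i : ℝ) * Real.log (p i) := by
    rw [hm]
    push_cast
    rw [Real.log_prod (fun i _ => pow_ne_zero _ (hppos i).ne')]
    apply Finset.sum_congr rfl
    intro i _
    rw [Real.log_pow]
  have hln : Real.log n = ∑ i, (e (ρ i) : ℝ) * Real.log (q i) := by
    rw [hnprod]
    push_cast
    rw [Real.log_prod (fun i _ => pow_ne_zero _ (hqpos i).ne')]
    apply Finset.sum_congr rfl
    intro i _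
    rw [Real.log_pow]
  have stepA : ∑ i, (e i : ℝ) * Real.log (p i) ≤ ∑ i, (e i : ℝ) * Real.log (q i) := by
    apply Finset.sum_le_sum
    intro i _
    apply mul_le_mul_of_nonneg_left _ (by positivity)
    exact Real.log_le_log (hppos i) (by exact_mod_cast hple i)
  have stepB : ∑ i, (e i : ℝ) * Real.log (q i) ≤ ∑ i, (e (ρ i) : ℝ) * Real.log (q i) := by
    have := rearrange e he ρ (fun i a => -((a : ℝ) * Real.log (q i)))
      (fun i t => -Real.log (q i)) ?_ ?_
    · have h2 : -∑ i, ((e (ρ i) : ℝ) * Real.log (q i)) ≤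
          -∑ i, ((e i : ℝ) * Real.log (q i)) := by
        rw [← Finset.sum_neg_distrib, ← Finset.sum_neg_distrib]
        exact this
      linarith
    · intro i a
      rw [Finset.sum_const, Finset.card_range]
      simp [nsmul_eq_mul]
    · intro t i j hij
      apply neg_le_neg
      exact Real.log_le_log (hqpos i) (by exact_mod_cast hqmono.monotone hij)
  have hlogmn : Real.log m ≤ Real.log n := by
    rw [hlm, hln]
    exact stepA.trans stepB
  -- finish
  have hm0 : (0:ℝ) < m := by exact_mod_cast lt_of_lt_of_le two_pos hm2
  have hσm1 : (1:ℝ) ≤ ((∑ d ∈ m.divisors, d : ℕ) : ℝ) / m := by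
    rw [le_div_iff₀ hm0, one_mul]
    have : m ≤ ∑ d ∈ m.divisors, d :=
      Finset.single_le_sum (f := fun d => d) (fun i _ => Nat.zero_le i)
        (Nat.mem_divisors_self m (by omega))
    exact_mod_cast this
  have hll : 0 < Real.log (Real.log m) := by
    by_contra hc
    push_neg at hc
    have h3 : Real.exp Real.eulerMascheroniConstant * Real.log (Real.log m) ≤ 0 :=
      mul_nonpos_of_nonneg_of_nonpos (Real.exp_pos _).le hc
    linarith [hσm1.trans_lt h]
  have hlogm_pos : 0 < Real.log m := Real.log_pos (by exact_mod_cast hm2)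
  have hlln : Real.log (Real.log m) ≤ Real.log (Real.log n) :=
    Real.log_le_log hlogm_pos hlogmn
  calc ((∑ d ∈ n.divisors, d : ℕ) : ℝ) / n ≤ ((∑ d ∈ m.divisors, d : ℕ) : ℝ) / m := by
        rw [hσn, hσm]
        exact step1.trans step2
    _ < Real.exp Real.eulerMascheroniConstant * Real.log (Real.log m) := h
    _ ≤ Real.exp Real.eulerMascheroniConstant * Real.log (Real.log n) :=
        mul_le_mul_of_nonneg_left hlln (Real.exp_pos _).le
end
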